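/- Let A be a bialgebra over a field k and let ζ : A ⊗ A → k be a Hochschild 2-cocycle such that ζ(1 ⊗ a) = 0 = ζ(a ⊗ 1) for all a ∈ A, ζ*ζ = 0 in the convolution algebra of linear maps A⊗A → k, and (ε⊗ζ)*(ζ∘(id⊗m)) = (ζ⊗ε)*(ζ∘(m⊗id)) in the convolution algebra of linear maps A⊗A⊗A → k. Then σ := ε_{A⊗A} + ζ (where ε_{A⊗A}(x⊗y) = ε(x)ε(y)) is a normalized multiplicative 2-cocycle on A, with convolution inverse ε_{A⊗A} − ζ. -/

import Mathlib

open TensorProduct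

universe u

/-- The convolution product of two linear maps from a coalgebra to an algebra. -/
noncomputable def conv {k C B : Type*} [CommRing k]
    [AddCommGroup C] [Module k C] [Coalgebra k C]
    [Ring B] [Algebra k B] (f g : C →ₗ[k] B) : C →ₗ[k] B :=
  LinearMap.mul' k B ∘ₗ TensorProduct.map f g ∘ₗ Coalgebra.comul

section

variable {k A : Type u} [Field k] [Ring A] [Bialgebra k A]

/-- `ε⊗f : x⊗(y⊗z) ↦ ε(x)f(y⊗z)`. -/
noncomputable def epsTensor (f : A ⊗[k] A →ₗ[k] k) : A ⊗[k] (A ⊗[k] A) →ₗ[k] k :=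
  LinearMap.mul' k k ∘ₗ TensorProduct.map (Coalgebra.counit : A →ₗ[k] k) f

/-- `f⊗ε : x⊗(y⊗z) ↦ f(x⊗y)ε(z)`. -/
noncomputable def tensorEps (f : A ⊗[k] A →ₗ[k] k) : A ⊗[k] (A ⊗[k] A) →ₗ[k] k :=
  LinearMap.mul' k k ∘ₗ TensorProduct.map f (Coalgebra.counit : A →ₗ[k] k)
    ∘ₗ (TensorProduct.assoc k A A A).symm.toLinearMap

/-- `f∘(id⊗m) : x⊗(y⊗z) ↦ f(x ⊗ yz)`. -/
noncomputable def fIdMul (f : A ⊗[k] A →ₗ[k] k) : A ⊗[k] (A ⊗[k] A) →ₗ[k] k :=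
  f ∘ₗ TensorProduct.map LinearMap.id (LinearMap.mul' k A)

/-- `f∘(m⊗id) : x⊗(y⊗z) ↦ f(xy ⊗ z)`. -/
noncomputable def fMulId (f : A ⊗[k] A →ₗ[k] k) : A ⊗[k] (A ⊗[k] A) →ₗ[k] k :=
  f ∘ₗ TensorProduct.map (LinearMap.mul' k A) LinearMap.id
    ∘ₗ (TensorProduct.assoc k A A A).symm.toLinearMap

section AuxConv

variable {k C : Type*} [CommRing k] [AddCommGroup C] [Module k C] [Coalgebra k C]

lemma conv_counit_left' (f : C →ₗ[k] k) : conv (Coalgebra.counit : C →ₗ[k] k) f = f := by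
  apply LinearMap.ext; intro c
  simp only [conv, LinearMap.comp_apply]
  rw [← LinearMap.lTensor_comp_rTensor, LinearMap.comp_apply,
    Coalgebra.rTensor_counit_comul]
  simp

lemma conv_counit_right' (f : C →ₗ[k] k) : conv f (Coalgebra.counit : C →ₗ[k] k) = f := by
  apply LinearMap.ext; intro c
  simp only [conv, LinearMap.comp_apply]
  rw [← LinearMap.rTensor_comp_lTensor, LinearMap.comp_apply,
    Coalgebra.lTensor_counit_comul]
  simp

lemma conv_add_left' (f g h : C →ₗ[k] k) : conv (f + g) h = conv f h + conv g h := by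
  unfold conv
  rw [TensorProduct.map_add_left, LinearMap.add_comp, LinearMap.comp_add]

lemma conv_add_right' (f g h : C →ₗ[k] k) : conv f (g + h) = conv f g + conv f h := by
  unfold conv
  rw [TensorProduct.map_add_right, LinearMap.add_comp, LinearMap.comp_add]

lemma conv_sub_right' (f g h : C →ₗ[k] k) : conv f (g - h) = conv f g - conv f h := by
  have hm : TensorProduct.map f (g - h) = TensorProduct.map f g - TensorProduct.map f h := by
    apply TensorProduct.ext'; intro x y
    simp [TensorProduct.tmul_sub]
  unfold conv
  rw [hm, LinearMap.sub_comp, LinearMap.comp_sub]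

lemma conv_sub_left' (f g h : C →ₗ[k] k) : conv (f - g) h = conv f h - conv g h := by
  have hm : TensorProduct.map (f - g) h = TensorProduct.map f h - TensorProduct.map g h := by
    apply TensorProduct.ext'; intro x y
    simp [TensorProduct.sub_tmul]
  unfold conv
  rw [hm, LinearMap.sub_comp, LinearMap.comp_sub]

end AuxConv

section AuxEval

variable {k A : Type u} [Field k] [Ring A] [Bialgebra k A]

lemma epsTensor_apply (f : A ⊗[k] A →ₗ[k] k) (x y z : A) :
    epsTensor f (x ⊗ₜ[k] (y ⊗ₜ[k] z)) = Coalgebra.counit x * f (y ⊗ₜ z) := by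
  simp [epsTensor]

lemma tensorEps_apply (f : A ⊗[k] A →ₗ[k] k) (x y z : A) :
    tensorEps f (x ⊗ₜ[k] (y ⊗ₜ[k] z)) = f (x ⊗ₜ y) * Coalgebra.counit z := by
  simp [tensorEps]

lemma fIdMul_apply (f : A ⊗[k] A →ₗ[k] k) (x y z : A) :
    fIdMul f (x ⊗ₜ[k] (y ⊗ₜ[k] z)) = f (x ⊗ₜ (y * z)) := by simp [fIdMul]

lemma fMulId_apply (f : A ⊗[k] A →ₗ[k] k) (x y z : A) :
    fMulId f (x ⊗ₜ[k] (y ⊗ₜ[k] z)) = f ((x * y) ⊗ₜ z) := by simp [fMulId]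

lemma epsTensor_counit : epsTensor (Coalgebra.counit : A ⊗[k] A →ₗ[k] k)
    = (Coalgebra.counit : A ⊗[k] (A ⊗[k] A) →ₗ[k] k) := by
  ext x y z; simp [epsTensor, mul_assoc]; ring

lemma tensorEps_counit : tensorEps (Coalgebra.counit : A ⊗[k] A →ₗ[k] k)
    = (Coalgebra.counit : A ⊗[k] (A ⊗[k] A) →ₗ[k] k) := by
  ext x y z; simp [tensorEps, mul_assoc]; ring

lemma fIdMul_counit : fIdMul (Coalgebra.counit : A ⊗[k] A →ₗ[k] k)
    = (Coalgebra.counit : A ⊗[k] (A ⊗[k] A) →ₗ[k] k) := by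
  ext x y z; simp [fIdMul, mul_assoc]; ring

lemma fMulId_counit : fMulId (Coalgebra.counit : A ⊗[k] A →ₗ[k] k)
    = (Coalgebra.counit : A ⊗[k] (A ⊗[k] A) →ₗ[k] k) := by
  ext x y z; simp [fMulId, mul_assoc]; left; ring

lemma epsTensor_add (f g : A ⊗[k] A →ₗ[k] k) :
    epsTensor (f + g) = epsTensor f + epsTensor g := by
  ext x y z; simp [epsTensor_apply, mul_add]

lemma tensorEps_add (f g : A ⊗[k] A →ₗ[k] k) :
    tensorEps (f + g) = tensorEps f + tensorEps g := by
  ext x y z; simp [tensorEps_apply, add_mul]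

lemma fIdMul_add (f g : A ⊗[k] A →ₗ[k] k) :
    fIdMul (f + g) = fIdMul f + fIdMul g := by
  ext x y z; simp [fIdMul_apply]

lemma fMulId_add (f g : A ⊗[k] A →ₗ[k] k) :
    fMulId (f + g) = fMulId f + fMulId g := by
  ext x y z; simp [fMulId_apply]

end AuxEval

/-- If `ζ : A ⊗ A → k` is a Hochschild 2-cocycle with `ζ(1⊗a) = 0 = ζ(a⊗1)`, `ζ*ζ = 0`
and `(ε⊗ζ)*(ζ∘(id⊗m)) = (ζ⊗ε)*(ζ∘(m⊗id))`, then `σ = ε_{A⊗A} + ζ` is a normalized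
multiplicative 2-cocycle on `A`, with convolution inverse `ε_{A⊗A} − ζ`. -/

theorem eps_add_hochschild_is_mult_cocycle
    (ζ : A ⊗[k] A →ₗ[k] k)
    (hHoch : ∀ x y z : A,
        Coalgebra.counit x * ζ (y ⊗ₜ[k] z) + ζ (x ⊗ₜ[k] (y * z))
          = ζ (x ⊗ₜ[k] y) * Coalgebra.counit z + ζ ((x * y) ⊗ₜ[k] z))
    (hnorm₁ : ∀ a : A, ζ ((1 : A) ⊗ₜ[k] a) = 0)
    (hnorm₂ : ∀ a : A, ζ (a ⊗ₜ[k] (1 : A)) = 0)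
    (hsq : conv ζ ζ = 0)
    (hcomm : conv (epsTensor ζ) (fIdMul ζ) = conv (tensorEps ζ) (fMulId ζ)) :
    (conv (epsTensor ((Coalgebra.counit : A ⊗[k] A →ₗ[k] k) + ζ))
        (fIdMul ((Coalgebra.counit : A ⊗[k] A →ₗ[k] k) + ζ))
      = conv (tensorEps ((Coalgebra.counit : A ⊗[k] A →ₗ[k] k) + ζ))
        (fMulId ((Coalgebra.counit : A ⊗[k] A →ₗ[k] k) + ζ))) ∧
    (∀ a : A, ((Coalgebra.counit : A ⊗[k] A →ₗ[k] k) + ζ) ((1 : A) ⊗ₜ[k] a)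
        = Coalgebra.counit a) ∧
    (∀ a : A, ((Coalgebra.counit : A ⊗[k] A →ₗ[k] k) + ζ) (a ⊗ₜ[k] (1 : A))
        = Coalgebra.counit a) ∧
    (conv ((Coalgebra.counit : A ⊗[k] A →ₗ[k] k) + ζ)
        ((Coalgebra.counit : A ⊗[k] A →ₗ[k] k) - ζ)
      = (Coalgebra.counit : A ⊗[k] A →ₗ[k] k)) ∧
    (conv ((Coalgebra.counit : A ⊗[k] A →ₗ[k] k) - ζ)
        ((Coalgebra.counit : A ⊗[k] A →ₗ[k] k) + ζ)
      = (Coalgebra.counit : A ⊗[k] A →ₗ[k] k)) := by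
  have hH : epsTensor ζ + fIdMul ζ = tensorEps ζ + fMulId ζ := by
    ext x y z
    simpa [epsTensor_apply, tensorEps_apply, fIdMul_apply, fMulId_apply] using hHoch x y z
  refine ⟨?_, ?_, ?_, ?_, ?_⟩
  · rw [epsTensor_add, fIdMul_add, tensorEps_add, fMulId_add,
      epsTensor_counit, fIdMul_counit, tensorEps_counit, fMulId_counit]
    simp only [conv_add_left', conv_add_right', conv_counit_left', conv_counit_right']
    apply LinearMap.ext; intro c
    have h1 := LinearMap.congr_fun hcomm c
    have h2 := LinearMap.congr_fun hH c
    simp only [LinearMap.add_apply] at h1 h2 ⊢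
    linear_combination h1 + h2
  · intro a; simp [hnorm₁]
  · intro a; simp [hnorm₂]
  · simp only [conv_add_left', conv_sub_right', conv_counit_left', conv_counit_right', hsq]
    abel
  · simp only [conv_sub_left', conv_add_right', conv_counit_left', conv_counit_right', hsq]
    abel

end
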